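/- arXiv:2306.16421 — 3 statements merged into one kernel-verified Lean document; each statement's English description precedes it below -/
import Mathlib

section
/- Let R be a nearfield. In R every equation 0 = α·x + β·y with α·x = -β·y can be multiplied on the right: (α·x + β·y)·γ = α·x·γ + β·y·γ for such elements, i.e. right distributivity holds across sums equal to zero. -/
open scoped BigOperators

/-- A (left) nearfield: a zero-symmetric (left) nearring whose nonzero
elements form a multiplicative group. The additive group is abelian. -/
class Nearfield (R : Type*) extends AddCommGroup R, One R, Mul R, Inv R where
  protected mul_assoc : ∀ a b c : R, a * b * c = a * (b * c)
  protected left_distrib : ∀ a b c : R, a * (b + c) = a * b + a * c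
  protected zero_mul : ∀ a : R, (0 : R) * a = 0
  protected mul_zero : ∀ a : R, a * (0 : R) = 0
  protected one_mul : ∀ a : R, (1 : R) * a = a
  protected mul_one : ∀ a : R, a * (1 : R) = a
  protected one_ne_zero : (1 : R) ≠ 0
  protected mul_inv_cancel : ∀ a : R, a ≠ 0 → a * a⁻¹ = 1
  protected inv_mul_cancel : ∀ a : R, a ≠ 0 → a⁻¹ * a = 1

namespace Nearfield

/-- A nearfield is proper if it is not a skewfield (right distributivity fails). -/
def IsProper (R : Type*) [Nearfield R] : Prop :=
  ∃ a b c : R, (a + b) * c ≠ a * c + b * c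

variable {R : Type*} [Nearfield R]

/-- Right scalar multiplication on `R^n`, applied coordinatewise. -/
def vsmul {n : ℕ} (v : Fin n → R) (r : R) : Fin n → R := fun i => v i * r

/-- An `R`-subgroup of `R^n`: an additive subgroup closed under right scalar
multiplication. -/
def IsRSubgroup {n : ℕ} (H : Set (Fin n → R)) : Prop :=
  (0 : Fin n → R) ∈ H ∧ (∀ x ∈ H, ∀ y ∈ H, x + y ∈ H) ∧
    (∀ x ∈ H, -x ∈ H) ∧ (∀ x ∈ H, ∀ r : R, vsmul x r ∈ H)

/-- `gen S` is the smallest `R`-subgroup containing `S`. -/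
def gen {n : ℕ} (S : Set (Fin n → R)) : Set (Fin n → R) :=
  ⋂₀ {H : Set (Fin n → R) | IsRSubgroup H ∧ S ⊆ H}

/-- The support of a vector. -/
def supp {n : ℕ} (u : Fin n → R) : Set (Fin n) := {i | u i ≠ 0}

/-- `dirSum u = { Σ_i u_i r_i : r_i ∈ R }`. -/
def dirSum {n ℓ : ℕ} (u : Fin ℓ → Fin n → R) : Set (Fin n → R) :=
  {v | ∃ r : Fin ℓ → R, v = ∑ i, vsmul (u i) (r i)}

/-- The "scalar product" `⟨x,y⟩ = Σ_i x_i·y_i`. -/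
def dot {n : ℕ} (x y : Fin n → R) : R := ∑ i, x i * y i

/-- The weight of a vector: the number of its nonzero coordinates. -/
noncomputable def weight {n : ℕ} (u : Fin n → R) : ℕ := (supp u).ncard

/-- A vector is simple if it has weight one or two. -/
def IsSimple {n : ℕ} (u : Fin n → R) : Prop := weight u = 1 ∨ weight u = 2

/-- The orthogonal set `D^⊥`. -/
def perp {n : ℕ} (D : Set (Fin n → R)) : Set (Fin n → R) :=
  {x | ∀ e ∈ D, dot e x = 0}

/-- `c(k,R)`: nonzero vectors of `R^k` whose first nonzero coordinate is `1`. -/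
def cSet (R : Type*) [Nearfield R] (k : ℕ) : Set (Fin k → R) :=
  {u | ∃ i : Fin k, u i = 1 ∧ ∀ j : Fin k, j < i → u j = 0}

/-- The seed number of `T`: the least size of a set generating `T`. -/
noncomputable def seed {n : ℕ} (T : Set (Fin n → R)) : ℕ :=
  sInf {k | ∃ S : Finset (Fin n → R), S.card = k ∧ gen (↑S : Set (Fin n → R)) = T}

/-- Iterated linear-combination closures. -/
def LC {n : ℕ} (S : Set (Fin n → R)) : ℕ → Set (Fin n → R)
  | 0 => S
  | m + 1 => {v | ∃ (ℓ : ℕ) (w : Fin ℓ → Fin n → R) (lam : Fin ℓ → R),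
      (∀ i, w i ∈ LC S m) ∧ v = ∑ i, vsmul (w i) (lam i)}

end Nearfield

/-- Stirling numbers of the second kind. -/
def stirling2 : ℕ → ℕ → ℕ
  | 0, 0 => 1
  | 0, _ + 1 => 0
  | _ + 1, 0 => 0
  | n + 1, k + 1 => (k + 1) * stirling2 n (k + 1) + stirling2 n k

open Nearfield

namespace Nearfield

variable {R : Type*} [Nearfield R]

theorem mul_neg (a b : R) : a * -b = -(a * b) := by
  refine eq_neg_of_add_eq_zero_right ?_
  rw [← Nearfield.left_distrib, add_neg_cancel, Nearfield.mul_zero]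

theorem neg_one_mul_neg_one : (-1 : R) * -1 = 1 := by
  rw [mul_neg, Nearfield.mul_one, neg_neg]

theorem eq_one_of_mul_eq_right {a b : R} (h : a * b = b) (hb : b ≠ 0) : a = 1 := by
  calc a = a * b * b⁻¹ := by
        rw [Nearfield.mul_assoc, Nearfield.mul_inv_cancel b hb, Nearfield.mul_one]
    _ = 1 := by rw [h, Nearfield.mul_inv_cancel b hb]

theorem neg_one_mul (c : R) : (-1 : R) * c = -c := by
  by_cases hfix : c + (-1 : R) * c = 0
  · exact eq_neg_of_add_eq_zero_left (by rwa [add_comm] at hfix)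
  -- Left multiplication by `-1` is an additive involution fixing `c + (-1) * c`;
  -- a nonzero fixed point forces `-1 = 1`.
  have hfixed : (-1 : R) * (c + (-1 : R) * c) = c + (-1 : R) * c := by
    rw [Nearfield.left_distrib, ← Nearfield.mul_assoc, neg_one_mul_neg_one, Nearfield.one_mul,
      add_comm]
  have hone : (-1 : R) = 1 := eq_one_of_mul_eq_right hfixed hfix
  have htwo : c + c = 0 := by
    rw [← Nearfield.mul_one c, ← Nearfield.left_distrib]
    nth_rewrite 1 [← hone]
    rw [neg_add_cancel, Nearfield.mul_zero]
  rw [hone, Nearfield.one_mul]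
  exact eq_neg_of_add_eq_zero_left htwo

theorem neg_mul (a c : R) : -a * c = -(a * c) := by
  have h : -a = a * -1 := by rw [mul_neg, Nearfield.mul_one]
  rw [h, Nearfield.mul_assoc, neg_one_mul, mul_neg]

end Nearfield

/-- Right distributivity across sums equal to zero: if `α·x = -(β·y)` then
`(α·x + β·y)·γ = α·x·γ + β·y·γ`. -/
theorem right_distrib_of_sum_eq_zero {R : Type*} [Nearfield R]
    (α β γ x y : R) (h : α * x = -(β * y)) :
    (α * x + β * y) * γ = α * x * γ + β * y * γ := by
  rw [h, neg_add_cancel, Nearfield.zero_mul, Nearfield.neg_mul, neg_add_cancel]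
end

section
/- Let R be a nearfield and let u_1,…,u_ℓ and u'_1,…,u'_ℓ be two sequences of nonzero vectors in R^n, each with mutually disjoint supports. Then ⊕_{i=1}^ℓ u_i R = ⊕_{i=1}^ℓ u'_i R if and only if there exist a permutation π of {1,…,ℓ} and nonzero scalars r_1,…,r_ℓ ∈ R such that u_i = u'_{π(i)}·r_i for every i. -/
open scoped BigOperators

open Nearfield

/-!
A nearfield has no zero divisors, so when the `u'_j` have disjoint supports the support of
`Σ u'_j t_j` is the union of the blocks `supp u'_j` with `t_j ≠ 0`. If the two direct sums agree,
each `supp u_i` is therefore a union of blocks `supp u'_j` and each `supp u'_j` a union of blocks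
`supp u_i`; disjointness forces the two block decompositions to coincide, so every `u_i` involves a
single `u'_j`. Conversely, reindexing and rescaling by invertible scalars does not change the direct
sum, because `u (r c) = (u r) c` needs only associativity.
-/

namespace Nearfield

variable {R : Type*} [Nearfield R] {n ℓ : ℕ}

protected theorem mul_ne_zero {a b : R} (ha : a ≠ 0) (hb : b ≠ 0) : a * b ≠ 0 := by
  intro hab
  apply hb
  calc b = a⁻¹ * (a * b) := by
          rw [← Nearfield.mul_assoc, Nearfield.inv_mul_cancel a ha, Nearfield.one_mul]
    _ = 0 := by rw [hab, Nearfield.mul_zero]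

theorem vsmul_apply (v : Fin n → R) (r : R) (k : Fin n) : vsmul v r k = v k * r := rfl

theorem vsmul_one (v : Fin n → R) : vsmul v (1 : R) = v :=
  funext fun _ => Nearfield.mul_one _

theorem vsmul_zero (v : Fin n → R) : vsmul v (0 : R) = 0 :=
  funext fun _ => Nearfield.mul_zero _

theorem vsmul_vsmul (v : Fin n → R) (a b : R) : vsmul (vsmul v a) b = vsmul v (a * b) :=
  funext fun _ => Nearfield.mul_assoc _ _ _

theorem supp_vsmul (v : Fin n → R) {r : R} (hr : r ≠ 0) : supp (vsmul v r) = supp v := by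
  ext k
  refine ⟨fun hk hv => hk ?_, fun hk => Nearfield.mul_ne_zero hk hr⟩
  rw [vsmul_apply, hv, Nearfield.zero_mul]

theorem exists_mem_supp {v : Fin n → R} (hv : v ≠ 0) : ∃ k, k ∈ supp v :=
  Function.ne_iff.mp hv

theorem mem_dirSum_self (u : Fin ℓ → Fin n → R) (i : Fin ℓ) : u i ∈ dirSum u := by
  refine ⟨Pi.single i 1, ?_⟩
  rw [Finset.sum_eq_single i (fun j _ hj => by rw [Pi.single_eq_of_ne hj, vsmul_zero])
    (fun hi => absurd (Finset.mem_univ i) hi), Pi.single_eq_same, vsmul_one]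

theorem sum_vsmul_eq_vsmul_of_eq_zero (b : Fin ℓ → Fin n → R) {t : Fin ℓ → R} {j : Fin ℓ}
    (ht : ∀ i, i ≠ j → t i = 0) : ∑ i, vsmul (b i) (t i) = vsmul (b j) (t j) :=
  Finset.sum_eq_single j (fun i _ hi => by rw [ht i hi, vsmul_zero])
    (fun hj => absurd (Finset.mem_univ j) hj)

theorem exists_coeff_ne_zero_of_mem_supp (b : Fin ℓ → Fin n → R) (t : Fin ℓ → R) {k : Fin n}
    (hk : k ∈ supp (∑ j, vsmul (b j) (t j))) : ∃ j, k ∈ supp (b j) ∧ t j ≠ 0 := by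
  change (∑ j, vsmul (b j) (t j)) k ≠ 0 at hk
  rw [Finset.sum_apply] at hk
  obtain ⟨j, -, hj⟩ := Finset.exists_ne_zero_of_sum_ne_zero hk
  refine ⟨j, fun h => hj ?_, fun h => hj ?_⟩
  · rw [vsmul_apply, h, Nearfield.zero_mul]
  · rw [vsmul_apply, h, Nearfield.mul_zero]

section DisjointSupports

variable {b : Fin ℓ → Fin n → R} (hb : ∀ i j, i ≠ j → supp (b i) ∩ supp (b j) = ∅)
include hb

theorem eq_of_mem_supp {k : Fin n} {i j : Fin ℓ} (hi : k ∈ supp (b i)) (hj : k ∈ supp (b j)) :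
    i = j := by
  by_contra hij
  have hk : k ∈ supp (b i) ∩ supp (b j) := ⟨hi, hj⟩
  rwa [hb i j hij] at hk

theorem eq_of_supp_subset {i j : Fin ℓ} (hi : b i ≠ 0) (hij : supp (b i) ⊆ supp (b j)) :
    i = j :=
  let ⟨_, hk⟩ := exists_mem_supp hi
  eq_of_mem_supp hb hk (hij hk)

theorem supp_subset_supp_sum_vsmul (t : Fin ℓ → R) {j : Fin ℓ} (ht : t j ≠ 0) :
    supp (b j) ⊆ supp (∑ i, vsmul (b i) (t i)) := by
  intro k hk
  have hcoord : (∑ i, vsmul (b i) (t i)) k = b j k * t j := by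
    rw [Finset.sum_apply]
    refine Finset.sum_eq_single j (fun i _ hij => ?_) (fun h => absurd (Finset.mem_univ j) h)
    have hik : b i k = 0 := not_not.mp fun hik => hij (eq_of_mem_supp hb hik hk)
    rw [vsmul_apply, hik, Nearfield.zero_mul]
  change (∑ i, vsmul (b i) (t i)) k ≠ 0
  exact hcoord ▸ Nearfield.mul_ne_zero hk ht

end DisjointSupports

section TwoFamilies

variable {u u' : Fin ℓ → Fin n → R}
  (hdisj : ∀ i j, i ≠ j → supp (u i) ∩ supp (u j) = ∅)
  (hdisj' : ∀ i j, i ≠ j → supp (u' i) ∩ supp (u' j) = ∅)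
  (h : dirSum u = dirSum u')
include hdisj hdisj' h

/-- Each block `supp (u' j)` occurring in `u i` is squeezed between `supp (u i)` and a block
`supp (u a)` meeting it, which by disjointness must be `supp (u i)` itself. -/
theorem supp_eq_of_coeff_ne_zero (hne' : ∀ j, u' j ≠ 0) {i : Fin ℓ} {t : Fin ℓ → R}
    (ht : u i = ∑ j, vsmul (u' j) (t j)) {j : Fin ℓ} (htj : t j ≠ 0) :
    supp (u i) = supp (u' j) := by
  have hji : supp (u' j) ⊆ supp (u i) := ht ▸ supp_subset_supp_sum_vsmul hdisj' t htj
  obtain ⟨s, hs⟩ : u' j ∈ dirSum u := h ▸ mem_dirSum_self u' j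
  obtain ⟨k, hk⟩ := exists_mem_supp (hne' j)
  obtain ⟨a, hka, hsa⟩ := exists_coeff_ne_zero_of_mem_supp u s (hs ▸ hk)
  have haj : supp (u a) ⊆ supp (u' j) := hs ▸ supp_subset_supp_sum_vsmul hdisj s hsa
  have hai : a = i := eq_of_mem_supp hdisj hka (hji (haj hka))
  exact (hai ▸ haj).antisymm hji

theorem exists_eq_vsmul_of_dirSum_eq (hne : ∀ i, u i ≠ 0) (hne' : ∀ j, u' j ≠ 0) (i : Fin ℓ) :
    ∃ j r, r ≠ 0 ∧ u i = vsmul (u' j) r := by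
  obtain ⟨t, ht⟩ : u i ∈ dirSum u' := h ▸ mem_dirSum_self u i
  have hsupp : ∀ {j}, t j ≠ 0 → supp (u i) = supp (u' j) :=
    supp_eq_of_coeff_ne_zero hdisj hdisj' h hne' ht
  obtain ⟨k, hk⟩ := exists_mem_supp (hne i)
  obtain ⟨j, -, htj⟩ := exists_coeff_ne_zero_of_mem_supp u' t (ht ▸ hk)
  have hzero : ∀ j', j' ≠ j → t j' = 0 := fun j' hj' => not_not.mp fun htj' =>
    hj' (eq_of_supp_subset hdisj' (hne' j') ((hsupp htj').symm.trans (hsupp htj)).subset)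
  exact ⟨j, t j, htj, ht.trans (sum_vsmul_eq_vsmul_of_eq_zero u' hzero)⟩

end TwoFamilies

theorem dirSum_vsmul (u : Fin ℓ → Fin n → R) {r : Fin ℓ → R} (hr : ∀ i, r i ≠ 0) :
    dirSum (fun i => vsmul (u i) (r i)) = dirSum u := by
  ext v
  constructor
  · rintro ⟨c, rfl⟩
    exact ⟨fun i => r i * c i, by simp only [vsmul_vsmul]⟩
  · rintro ⟨d, rfl⟩
    refine ⟨fun i => (r i)⁻¹ * d i, Finset.sum_congr rfl fun i _ => ?_⟩
    rw [vsmul_vsmul, ← Nearfield.mul_assoc, Nearfield.mul_inv_cancel _ (hr i), Nearfield.one_mul]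

theorem dirSum_comp_perm (u : Fin ℓ → Fin n → R) (π : Equiv.Perm (Fin ℓ)) :
    dirSum (u ∘ π) = dirSum u := by
  ext v
  constructor
  · rintro ⟨c, rfl⟩
    refine ⟨c ∘ π.symm, ?_⟩
    rw [← Equiv.sum_comp π (fun j => vsmul (u j) ((c ∘ π.symm) j))]
    simp only [Function.comp_apply, Equiv.symm_apply_apply]
  · rintro ⟨d, rfl⟩
    exact ⟨d ∘ π, (Equiv.sum_comp π (fun j => vsmul (u j) (d j))).symm⟩

end Nearfield

/-- Two direct sums of nonzero disjoint-support vectors coincide iff the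
generating vectors agree up to a permutation and nonzero right scalars. -/
theorem dirSum_eq_iff {R : Type*} [Nearfield R] {n ℓ : ℕ}
    (u u' : Fin ℓ → Fin n → R)
    (hne : ∀ i, u i ≠ 0) (hne' : ∀ i, u' i ≠ 0)
    (hdisj : ∀ i j, i ≠ j → supp (u i) ∩ supp (u j) = ∅)
    (hdisj' : ∀ i j, i ≠ j → supp (u' i) ∩ supp (u' j) = ∅) :
    dirSum u = dirSum u' ↔
      ∃ (π : Equiv.Perm (Fin ℓ)) (r : Fin ℓ → R),
        (∀ i, r i ≠ 0) ∧ ∀ i, u i = vsmul (u' (π i)) (r i) := by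
  constructor
  · intro h
    choose J r hr hu using exists_eq_vsmul_of_dirSum_eq hdisj hdisj' h hne hne'
    have hJ : Function.Injective J := fun i₁ i₂ hJ => eq_of_supp_subset hdisj (hne i₁) <| by
      rw [hu i₁, hu i₂, supp_vsmul _ (hr i₁), supp_vsmul _ (hr i₂), hJ]
    exact ⟨Equiv.ofBijective J (Finite.injective_iff_bijective.mp hJ), r, hr, hu⟩
  · rintro ⟨π, r, hr, hu⟩
    rw [show u = fun i => vsmul ((u' ∘ π) i) (r i) from funext hu, dirSum_vsmul _ hr,
      dirSum_comp_perm]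
end

section
/- Let R be an infinite proper nearfield. Then for every n ≥ 1 there exist two vectors v, w ∈ R^n such that gen(v,w) = R^n. -/
open scoped BigOperators

/-!
Take `v = 1` and a vector `w = t` with pairwise distinct coordinates. The `R`-subgroup generated
by `v` and `w` contains `(f (t i))ᵢ` for every function `f : R → R` built from `1` and the identity
by sums, negatives and right multiplications by constants, so it suffices that such functions
interpolate arbitrary values at finitely many points. By induction on the number of points this
reduces to the following step: writing `D x y q = (x + y) q - x q - y q`, the function
`s ↦ D (f₀ s * c) (s - t') q` vanishes at `t'` and at every zero of `f₀`, while at a point `t₀`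
with `f₀ t₀ ≠ 0` it takes the value `D z (t₀ - t') q` for a freely chosen `z`. In a proper
nearfield this value is nonzero for suitable `z, q`: if `D z k q` vanished for all `z, q` and one
`k ≠ 0`, rescaling `k` by right multiplication would make `D` vanish identically.
-/

namespace Nearfield

variable {R : Type*} [Nearfield R]

instance : MonoidWithZero R :=
  { (inferInstance : Mul R), (inferInstance : One R), (inferInstance : Zero R) with
    mul_assoc := Nearfield.mul_assoc
    one_mul := Nearfield.one_mul
    mul_one := Nearfield.mul_one
    zero_mul := Nearfield.zero_mul
    mul_zero := Nearfield.mul_zero }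

instance : LeftDistribClass R := ⟨Nearfield.left_distrib⟩

protected theorem mul_inv_cancel_left {a : R} (ha : a ≠ 0) (b : R) : a * (a⁻¹ * b) = b := by
  rw [← mul_assoc, Nearfield.mul_inv_cancel a ha, one_mul]

protected theorem inv_mul_cancel_right {a : R} (ha : a ≠ 0) (b : R) : b * a⁻¹ * a = b := by
  rw [mul_assoc, Nearfield.inv_mul_cancel a ha, mul_one]

def distribDefect (x y q : R) : R := (x + y) * q - x * q - y * q

theorem distribDefect_zero_left (y q : R) : distribDefect 0 y q = 0 := by
  simp [distribDefect]

theorem distribDefect_zero_right (x q : R) : distribDefect x 0 q = 0 := by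
  simp [distribDefect]

theorem distribDefect_mul_right_of_eq_zero {x y m : R} (h : distribDefect x y m = 0) (q : R) :
    distribDefect (x * m) (y * m) q = distribDefect x y (m * q) := by
  have hm : (x + y) * m = x * m + y * m := by
    rw [distribDefect, sub_sub, sub_eq_zero] at h
    exact h
  simp only [distribDefect, ← hm, mul_assoc]

theorem distribDefect_eq_zero_of_forall {k : R} (hk : k ≠ 0)
    (h : ∀ z q, distribDefect z k q = 0) (a b c : R) : distribDefect a b c = 0 := by
  rcases eq_or_ne b 0 with rfl | hb
  · exact distribDefect_zero_right a c
  set m := k⁻¹ * b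
  have hkm : k * m = b := Nearfield.mul_inv_cancel_left hk b
  have hm : m ≠ 0 := fun hm => hb (by rw [← hkm, hm, mul_zero])
  calc distribDefect a b c = distribDefect (a * m⁻¹ * m) (k * m) c := by
        rw [Nearfield.inv_mul_cancel_right hm, hkm]
    _ = distribDefect (a * m⁻¹) k (m * c) := distribDefect_mul_right_of_eq_zero (h _ _) c
    _ = 0 := h _ _

theorem IsProper.exists_distribDefect_ne_zero (hR : IsProper R) {k : R} (hk : k ≠ 0) :
    ∃ z q, distribDefect z k q ≠ 0 := by
  by_contra! h
  obtain ⟨a, b, c, habc⟩ := hR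
  apply habc
  rw [← sub_eq_zero, ← sub_sub]
  exact distribDefect_eq_zero_of_forall hk h a b c

inductive ExprFun : (R → R) → Prop
  | one : ExprFun fun _ => 1
  | id : ExprFun fun s => s
  | add {f g : R → R} : ExprFun f → ExprFun g → ExprFun fun s => f s + g s
  | neg {f : R → R} : ExprFun f → ExprFun fun s => -f s
  | mul_const {f : R → R} (r : R) : ExprFun f → ExprFun fun s => f s * r

namespace ExprFun

theorem const (c : R) : ExprFun fun _ : R => c := by
  simpa only [one_mul] using mul_const c one

theorem sub {f g : R → R} (hf : ExprFun f) (hg : ExprFun g) : ExprFun fun s => f s - g s := by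
  simpa only [← sub_eq_add_neg] using hf.add hg.neg

theorem distribDefect {f g : R → R} (hf : ExprFun f) (hg : ExprFun g) (q : R) :
    ExprFun fun s => Nearfield.distribDefect (f s) (g s) q :=
  (((hf.add hg).mul_const q).sub (hf.mul_const q)).sub (hg.mul_const q)

theorem comp_mem_gen {f : R → R} (hf : ExprFun f) {n : ℕ} (t : Fin n → R) :
    f ∘ t ∈ gen ({fun _ => 1, t} : Set (Fin n → R)) := by
  refine Set.mem_sInter.mpr fun H ⟨⟨_, hadd, hneg, hsmul⟩, hsub⟩ => ?_
  induction hf with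
  | one => exact hsub (Set.mem_insert _ _)
  | id => exact hsub (Set.mem_insert_of_mem _ rfl)
  | add _ _ ihf ihg => exact hadd _ ihf _ ihg
  | neg _ ih => exact hneg _ ih
  | mul_const r _ ih => exact hsmul _ ih r

end ExprFun

theorem IsProper.exists_exprFun_separating_point (hR : IsProper R) {f₀ : R → R} (hf₀ : ExprFun f₀)
    {t₀ t' : R} (ht : t₀ ≠ t') (h₀ : f₀ t₀ ≠ 0) :
    ∃ g, ExprFun g ∧ (∀ s, f₀ s = 0 → g s = 0) ∧ g t' = 0 ∧ g t₀ ≠ 0 := by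
  obtain ⟨z, q, hzq⟩ := hR.exists_distribDefect_ne_zero (sub_ne_zero.mpr ht)
  refine ⟨fun s => distribDefect (f₀ s * ((f₀ t₀)⁻¹ * z)) (s - t') q,
    (hf₀.mul_const _).distribDefect (ExprFun.id.sub (ExprFun.const t')) q, ?_, ?_, ?_⟩
  · intro s hs
    simp only [hs, zero_mul, distribDefect_zero_left]
  · simp only [sub_self, distribDefect_zero_right]
  · simpa only [Nearfield.mul_inv_cancel_left h₀] using hzq

theorem IsProper.exists_exprFun_separating (hR : IsProper R) (F : Finset R) {t₀ : R}
    (h : t₀ ∉ F) : ∃ f, ExprFun f ∧ (∀ t ∈ F, f t = 0) ∧ f t₀ ≠ 0 := by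
  classical
  induction F using Finset.induction_on with
  | empty => exact ⟨_, ExprFun.one, by simp, Nearfield.one_ne_zero⟩
  | @insert t' F _ ih =>
    rw [Finset.mem_insert, not_or] at h
    obtain ⟨f₀, hf₀, hF, h₀⟩ := ih h.2
    obtain ⟨g, hg, hg₀, hgt', hgt₀⟩ := hR.exists_exprFun_separating_point hf₀ h.1 h₀
    refine ⟨g, hg, ?_, hgt₀⟩
    rw [Finset.forall_mem_insert]
    exact ⟨hgt', fun t ht => hg₀ t (hF t ht)⟩

theorem IsProper.exists_exprFun_interpolating (hR : IsProper R) (F : Finset R) (y : R → R) :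
    ∃ f, ExprFun f ∧ ∀ t ∈ F, f t = y t := by
  classical
  induction F using Finset.induction_on with
  | empty => exact ⟨_, ExprFun.one, by simp⟩
  | @insert t' F ht' ih =>
    obtain ⟨f, hf, hfy⟩ := ih
    obtain ⟨g, hg, hgF, hgt'⟩ := hR.exists_exprFun_separating F ht'
    refine ⟨fun s => f s + g s * ((g t')⁻¹ * (y t' - f t')),
      hf.add (hg.mul_const _), ?_⟩
    rw [Finset.forall_mem_insert]
    refine ⟨by simp only [Nearfield.mul_inv_cancel_left hgt', add_sub_cancel], fun t ht => ?_⟩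
    simp only [hgF t ht, zero_mul, add_zero, hfy t ht]

end Nearfield

open Nearfield

theorem exists_two_generators_general {R : Type*} [Nearfield R] [Infinite R]
    (hR : IsProper R) (n : ℕ) :
    ∃ v w : Fin n → R, gen ({v, w} : Set (Fin n → R)) = Set.univ := by
  let t : Fin n ↪ R := Fin.valEmbedding.trans (Infinite.natEmbedding R)
  refine ⟨fun _ => 1, t, Set.eq_univ_of_forall fun y => ?_⟩
  obtain ⟨f, hf, hfy⟩ :=
    hR.exists_exprFun_interpolating (Finset.univ.map t) (Function.extend t y 0)
  have hft : f ∘ t = y :=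
    funext fun i => (hfy _ (by simp)).trans (t.injective.extend_apply y 0 i)
  exact hft ▸ hf.comp_mem_gen t

/-- Over an infinite proper nearfield, every `R^n` is generated by two vectors. -/
theorem exists_two_generators {R : Type*} [Nearfield R] [Infinite R]
    (hR : IsProper R) (n : ℕ) (hn : 1 ≤ n) :
    ∃ v w : Fin n → R, gen ({v, w} : Set (Fin n → R)) = Set.univ :=
  exists_two_generators_general hR n
end
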